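/- Let A be a commutative ring, M a symmetric m×m matrix with entries in A, and 2 ≤ t ≤ m. Let I_Y ⊆ A be the ideal generated by all t×t minors of M that do not involve the last row of M (i.e., minors using only rows from {1,…,m−1}, with arbitrary columns). Then for any strictly increasing tuples i₁<…<i_{t−1}, j₁<…<j_{t−1}, k₁<…<k_{t−1}, l₁<…<l_{t−1} of indices in {1,…,m−1}, the element M_{i₁,…,i_{t−1},m;j₁,…,j_{t−1},m}·M_{k₁,…,k_{t−1};l₁,…,l_{t−1}} − M_{k₁,…,k_{t−1},m;l₁,…,l_{t−1},m}·M_{i₁,…,i_{t−1};j₁,…,j_{t−1}} lies in I_Y. -/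
import Mathlib


open Matrix

noncomputable section

/-- The ideal generated by the `t × t` minors of a matrix. -/
def minorsIdeal {A : Type*} [CommRing A] {m n : ℕ}
    (M : Matrix (Fin m) (Fin n) A) (t : ℕ) : Ideal A :=
  Ideal.span { d | ∃ (f : Fin t → Fin m) (g : Fin t → Fin n),
    StrictMono f ∧ StrictMono g ∧ d = (M.submatrix f g).det }

/-- A matrix with polynomial entries is `t`-homogeneous if every `s × s` minor,
`s ≤ t`, is a homogeneous polynomial. -/
def IsTHomogeneous {K : Type*} [CommRing K] {σ : Type*} {m n : ℕ}
    (M : Matrix (Fin m) (Fin n) (MvPolynomial σ K)) (t : ℕ) : Prop :=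
  ∀ s ≤ t, ∀ (f : Fin s → Fin m) (g : Fin s → Fin n), StrictMono f → StrictMono g →
    ∃ d : ℕ, ((M.submatrix f g).det).IsHomogeneous d

/-- A `(m-1) × m` matrix is almost symmetric if the submatrix consisting of its
first `m-1` columns is symmetric. -/
def IsAlmostSymm {A : Type*} [CommRing A] {m : ℕ} (O : Matrix (Fin (m - 1)) (Fin m) A) : Prop :=
  ∀ i j : Fin (m - 1),
    O i (Fin.castLE (Nat.sub_le m 1) j) = O j (Fin.castLE (Nat.sub_le m 1) i)

/-- An ideal is a complete intersection if it is generated by a regular sequence. -/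
def Ideal.IsCompleteIntersection {A : Type*} [CommRing A] (I : Ideal A) : Prop :=
  ∃ rs : List A, RingTheory.Sequence.IsRegular A rs ∧ Ideal.span {x | x ∈ rs} = I

/-- The (Krull) height of an ideal: the infimum of the heights of the primes containing it. -/
def idealHeight {A : Type*} [CommRing A] (I : Ideal A) : ℕ∞ :=
  ⨅ (P : PrimeSpectrum A) (_ : I ≤ P.asIdeal), Order.height P

/-- An ideal is generically a complete intersection if its localization at every
minimal prime over it is a complete intersection. -/
def Ideal.IsGenericallyCI {A : Type*} [CommRing A] (I : Ideal A) : Prop :=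
  ∀ (P : Ideal A) (hP : P ∈ I.minimalPrimes),
    haveI : P.IsPrime := hP.1.1
    (I.map (algebraMap A (Localization P.primeCompl))).IsCompleteIntersection

/-- The depth of a local ring: the supremum of the lengths of regular sequences contained
in the maximal ideal. -/
def localRingDepth (S : Type*) [CommRing S] [IsLocalRing S] : ℕ∞ :=
  ⨆ (rs : List S) (_ : RingTheory.Sequence.IsRegular S rs)
    (_ : ∀ x ∈ rs, x ∈ IsLocalRing.maximalIdeal S), (rs.length : ℕ∞)

/-- A commutative ring is Cohen–Macaulay if for every prime `Q` the
localization at `Q` satisfies `depth = Krull dimension`. -/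
def IsCohenMacaulayRing (S : Type*) [CommRing S] : Prop :=
  ∀ (Q : Ideal S) (hQ : Q.IsPrime),
    haveI := hQ
    (localRingDepth (Localization Q.primeCompl) : WithBot ℕ∞) =
      ringKrullDim (Localization Q.primeCompl)
/-- Extend a strictly increasing `(t-1)`-tuple of indices in `{1, …, m-1}` to a `t`-tuple
of indices in `{1, …, m}` by appending the last index `m`. -/
def extendLast {m t : ℕ} (hm : 0 < m) (f : Fin (t - 1) → Fin (m - 1)) : Fin t → Fin m :=
  fun s => if h : (s : ℕ) < t - 1 then Fin.castLE (Nat.sub_le m 1) (f ⟨(s : ℕ), h⟩)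
    else ⟨m - 1, Nat.sub_lt hm Nat.one_pos⟩

lemma det_submatrix_mem_minorsIdeal {A : Type*} [CommRing A] {p q : ℕ}
    (O : Matrix (Fin p) (Fin q) A) (t : ℕ) (f : Fin t → Fin p) (g : Fin t → Fin q)
    (hg : StrictMono g) : (O.submatrix f g).det ∈ minorsIdeal O t := by
  by_cases hf : Function.Injective f
  · set σ := Tuple.sort f with hσ
    have hsm : StrictMono (f ∘ σ) :=
      (Tuple.monotone_sort f).strictMono_of_injective (hf.comp σ.injective)
    have hgen : (O.submatrix (f ∘ σ) g).det ∈ minorsIdeal O t :=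
      Ideal.subset_span ⟨f ∘ σ, g, hsm, hg, rfl⟩
    have hdet : (O.submatrix (f ∘ σ) g).det = (σ.sign : ℤ) * (O.submatrix f g).det :=
      Matrix.det_permute σ (O.submatrix f g)
    have h2 : (((σ.sign : ℤ) : A)) * (((σ.sign : ℤ) : A)) = 1 := by
      rw [← Int.cast_mul, ← Units.val_mul, Int.units_mul_self]; simp
    have : (O.submatrix f g).det = ((σ.sign : ℤ) : A) * (O.submatrix (f ∘ σ) g).det := by
      rw [hdet, ← mul_assoc, h2, one_mul]
    rw [this]
    exact Ideal.mul_mem_left _ _ hgen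
  · rw [Function.not_injective_iff] at hf
    obtain ⟨i, j, hij, hne⟩ := hf
    have : (O.submatrix f g).det = 0 :=
      Matrix.det_zero_of_row_eq hne (by funext y; simp [Matrix.submatrix, hij])
    rw [this]; exact Ideal.zero_mem _

lemma extendLast_castSucc {m n : ℕ} (hm : 0 < m) (g : Fin n → Fin (m - 1)) (r : Fin n) :
    extendLast (t := n + 1) hm g (Fin.castSucc r) = Fin.castLE (Nat.sub_le m 1) (g r) := by
  have h : ((Fin.castSucc r : Fin (n + 1)) : ℕ) < n + 1 - 1 := by simp [r.isLt]
  simp only [extendLast, dif_pos h]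
  have h2 : (⟨((Fin.castSucc r : Fin (n + 1)) : ℕ), h⟩ : Fin n) = r := Fin.ext (by simp)
  rw [h2]

lemma extendLast_last {m n : ℕ} (hm : 0 < m) (g : Fin n → Fin (m - 1)) :
    extendLast (t := n + 1) hm g (Fin.last n) = ⟨m - 1, Nat.sub_lt hm Nat.one_pos⟩ := by
  simp [extendLast]

lemma extendLast_strictMono {m n : ℕ} (hm : 0 < m) {g : Fin n → Fin (m - 1)}
    (hg : StrictMono g) : StrictMono (extendLast (t := n + 1) hm g) := by
  intro a b hab
  rcases Fin.eq_castSucc_or_eq_last b with ⟨b', rfl⟩ | rfl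
  · obtain ⟨a', rfl⟩ : ∃ a', a = Fin.castSucc a' :=
      ⟨⟨a, by have := hab; omega⟩, Fin.ext rfl⟩
    rw [extendLast_castSucc, extendLast_castSucc]
    have h1 : a' < b' := by
      rw [Fin.lt_def] at hab ⊢; simpa using hab
    have h2 := hg h1
    rw [Fin.lt_def] at h2 ⊢
    simpa using h2
  · obtain ⟨a', rfl⟩ : ∃ a', a = Fin.castSucc a' :=
      ⟨⟨a, by have := hab; simp [Fin.lt_def] at hab; omega⟩, Fin.ext rfl⟩
    rw [extendLast_castSucc, extendLast_last]
    have h1 : ((g a' : ℕ)) < m - 1 := (g a').isLt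
    rw [Fin.lt_def]
    simpa using h1

lemma statement12_expand {A : Type*} [CommRing A] {m n : ℕ} (hm : 0 < m) (M : Matrix (Fin m) (Fin m) A)
    (u : Fin (n + 1) → Fin m) (g : Fin n → Fin (m - 1)) :
    (M.submatrix u (extendLast (t := n + 1) hm g)).det =
      (∑ r : Fin n, (-1) ^ (n + (r : ℕ)) *
          M (u (Fin.last n)) (Fin.castLE (Nat.sub_le m 1) (g r)) *
        (M.submatrix (u ∘ Fin.castSucc)
          (extendLast (t := n + 1) hm g ∘ (Fin.castSucc r).succAbove)).det)
      + M (u (Fin.last n)) ⟨m - 1, Nat.sub_lt hm Nat.one_pos⟩ *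
        (M.submatrix (u ∘ Fin.castSucc) (fun s => Fin.castLE (Nat.sub_le m 1) (g s))).det := by
  rw [Matrix.det_succ_row _ (Fin.last n), Fin.sum_univ_castSucc]
  congr 1
  · refine Finset.sum_congr rfl fun r _ => ?_
    rw [Matrix.submatrix_apply, extendLast_castSucc, Matrix.submatrix_submatrix,
      Fin.succAbove_last]
    simp
  · rw [Matrix.submatrix_apply, extendLast_last, Matrix.submatrix_submatrix,
      Fin.succAbove_last]
    have hc : extendLast (t := n + 1) hm g ∘ (Fin.last n).succAbove
        = fun s => Fin.castLE (Nat.sub_le m 1) (g s) := by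
      funext s
      rw [Fin.succAbove_last]
      exact extendLast_castSucc hm g s
    rw [Fin.succAbove_last] at hc
    rw [hc]
    have : ((-1 : A)) ^ ((Fin.last n : ℕ) + (Fin.last n : ℕ)) = 1 :=
      Even.neg_one_pow ⟨n, by simp⟩
    rw [this, one_mul]

theorem statement12_aux {A : Type*} [CommRing A] (m n : ℕ) (hm : n + 1 ≤ m)
    (M : Matrix (Fin m) (Fin m) A) (hsymm : M.IsSymm)
    (fi fj fk fl : Fin n → Fin (m - 1))
    (hfi : StrictMono fi) (hfj : StrictMono fj)
    (hfk : StrictMono fk) (hfl : StrictMono fl) :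
    (M.submatrix (extendLast (t := n + 1) (by omega) fi)
          (extendLast (t := n + 1) (by omega) fj)).det *
        (M.submatrix (fun s => Fin.castLE (Nat.sub_le m 1) (fk s))
          (fun s => Fin.castLE (Nat.sub_le m 1) (fl s))).det -
      (M.submatrix (extendLast (t := n + 1) (by omega) fk)
          (extendLast (t := n + 1) (by omega) fl)).det *
        (M.submatrix (fun s => Fin.castLE (Nat.sub_le m 1) (fi s))
          (fun s => Fin.castLE (Nat.sub_le m 1) (fj s))).det ∈
      minorsIdeal
        (Matrix.of fun (i : Fin (m - 1)) (j : Fin m) => M (Fin.castLE (Nat.sub_le m 1) i) j)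
        (n + 1) := by
  have hm0 : 0 < m := by omega
  show (M.submatrix (extendLast (t := n + 1) hm0 fi)
          (extendLast (t := n + 1) hm0 fj)).det *
        (M.submatrix (fun s => Fin.castLE (Nat.sub_le m 1) (fk s))
          (fun s => Fin.castLE (Nat.sub_le m 1) (fl s))).det -
      (M.submatrix (extendLast (t := n + 1) hm0 fk)
          (extendLast (t := n + 1) hm0 fl)).det *
        (M.submatrix (fun s => Fin.castLE (Nat.sub_le m 1) (fi s))
          (fun s => Fin.castLE (Nat.sub_le m 1) (fj s))).det ∈
      minorsIdeal
        (Matrix.of fun (i : Fin (m - 1)) (j : Fin m) => M (Fin.castLE (Nat.sub_le m 1) i) j)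
        (n + 1)
  set O : Matrix (Fin (m - 1)) (Fin m) A :=
    Matrix.of fun (i : Fin (m - 1)) (j : Fin m) => M (Fin.castLE (Nat.sub_le m 1) i) j with hO
  set ρ : Fin (m - 1) → Fin m := Fin.castLE (Nat.sub_le m 1) with hρ
  set em : Fin m := ⟨m - 1, Nat.sub_lt hm0 Nat.one_pos⟩ with hem
  have hs : ∀ a b : Fin m, M a b = M b a := fun a b => hsymm.apply b a
  set sg : Fin n → A := fun x => (-1 : A) ^ (n + (x : ℕ)) with hsg
  set IJ := (M.submatrix (fun s => ρ (fi s)) (fun s => ρ (fj s))).det with hIJ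
  set KL := (M.submatrix (fun s => ρ (fk s)) (fun s => ρ (fl s))).det with hKL
  set B : Fin n → A := fun s =>
    (M.submatrix (fun x => ρ (fi x))
      (extendLast (t := n + 1) hm0 fj ∘ (Fin.castSucc s).succAbove)).det with hB
  set C : Fin n → A := fun r =>
    (M.submatrix (fun x => ρ (fk x))
      (extendLast (t := n + 1) hm0 fl ∘ (Fin.castSucc r).succAbove)).det with hC
  set E : Fin n → A := fun s =>
    (M.submatrix (Fin.snoc (fun x => ρ (fk x)) (ρ (fj s)))
      (extendLast (t := n + 1) hm0 fl)).det with hEd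
  set F : Fin n → A := fun r =>
    (M.submatrix (Fin.snoc (fun x => ρ (fi x)) (ρ (fl r)))
      (extendLast (t := n + 1) hm0 fj)).det with hFd
  set D1 := (M.submatrix (extendLast (t := n + 1) hm0 fi)
      (extendLast (t := n + 1) hm0 fj)).det with hD1d
  set D2 := (M.submatrix (extendLast (t := n + 1) hm0 fk)
      (extendLast (t := n + 1) hm0 fl)).det with hD2d
  have hui : (extendLast (t := n + 1) hm0 fi) ∘ Fin.castSucc = fun x => ρ (fi x) :=
    funext fun x => extendLast_castSucc hm0 fi x
  have huk : (extendLast (t := n + 1) hm0 fk) ∘ Fin.castSucc = fun x => ρ (fk x) :=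
    funext fun x => extendLast_castSucc hm0 fk x
  have hD1 : D1 = (∑ s : Fin n, sg s * M (ρ (fj s)) em * B s) + M em em * IJ := by
    rw [hD1d, statement12_expand hm0 M _ fj, extendLast_last, hui]
    simp only [hB, hIJ, hsg, hem, hρ]
    congr 1
    refine Finset.sum_congr rfl fun s _ => ?_
    rw [hs (⟨m - 1, Nat.sub_lt hm0 Nat.one_pos⟩ : Fin m) (Fin.castLE (Nat.sub_le m 1) (fj s))]
  have hD2 : D2 = (∑ r : Fin n, sg r * M (ρ (fl r)) em * C r) + M em em * KL := by
    rw [hD2d, statement12_expand hm0 M _ fl, extendLast_last, huk]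
    simp only [hC, hKL, hsg, hem, hρ]
    congr 1
    refine Finset.sum_congr rfl fun r _ => ?_
    rw [hs (⟨m - 1, Nat.sub_lt hm0 Nat.one_pos⟩ : Fin m) (Fin.castLE (Nat.sub_le m 1) (fl r))]
  have hEe : ∀ s, E s = (∑ r : Fin n, sg r * M (ρ (fj s)) (ρ (fl r)) * C r)
      + M (ρ (fj s)) em * KL := by
    intro s
    simp only [hEd]
    rw [statement12_expand hm0 M _ fl]
    rw [Fin.snoc_comp_castSucc, Fin.snoc_last]
  have hFe : ∀ r, F r = (∑ s : Fin n, sg s * M (ρ (fj s)) (ρ (fl r)) * B s)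
      + M (ρ (fl r)) em * IJ := by
    intro r
    simp only [hFd]
    rw [statement12_expand hm0 M _ fj]
    rw [Fin.snoc_comp_castSucc, Fin.snoc_last]
    simp only [hB, hIJ, hsg, hem, hρ]
    congr 1
    refine Finset.sum_congr rfl fun s _ => ?_
    rw [hs (Fin.castLE (Nat.sub_le m 1) (fl r)) (Fin.castLE (Nat.sub_le m 1) (fj s))]
  have h1 : ∑ s : Fin n, sg s * B s * E s
      = (∑ s : Fin n, ∑ r : Fin n,
          sg s * sg r * M (ρ (fj s)) (ρ (fl r)) * B s * C r)
        + ∑ s : Fin n, sg s * M (ρ (fj s)) em * B s * KL := by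
    rw [← Finset.sum_add_distrib]
    refine Finset.sum_congr rfl fun s _ => ?_
    rw [hEe s, mul_add, Finset.mul_sum]
    congr 1
    · exact Finset.sum_congr rfl fun r _ => by ring
    · ring
  have h2 : ∑ r : Fin n, sg r * C r * F r
      = (∑ s : Fin n, ∑ r : Fin n,
          sg s * sg r * M (ρ (fj s)) (ρ (fl r)) * B s * C r)
        + ∑ r : Fin n, sg r * M (ρ (fl r)) em * C r * IJ := by
    have : ∑ r : Fin n, sg r * C r * F r
        = (∑ r : Fin n, ∑ s : Fin n,
            sg s * sg r * M (ρ (fj s)) (ρ (fl r)) * B s * C r)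
          + ∑ r : Fin n, sg r * M (ρ (fl r)) em * C r * IJ := by
      rw [← Finset.sum_add_distrib]
      refine Finset.sum_congr rfl fun r _ => ?_
      rw [hFe r, mul_add, Finset.mul_sum]
      congr 1
      · exact Finset.sum_congr rfl fun s _ => by ring
      · ring
    rw [this, Finset.sum_comm]
  have key : D1 * KL - D2 * IJ
      = (∑ s : Fin n, sg s * B s * E s) - ∑ r : Fin n, sg r * C r * F r := by
    rw [hD1, hD2, h1, h2, add_mul, add_mul, Finset.sum_mul, Finset.sum_mul]
    ring
  rw [key]
  have hEm : ∀ s, E s ∈ minorsIdeal O (n + 1) := by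
    intro s
    have hrow : (Fin.snoc (fun x => ρ (fk x)) (ρ (fj s)) : Fin (n + 1) → Fin m)
        = ρ ∘ Fin.snoc fk (fj s) := (Fin.comp_snoc ρ fk (fj s)).symm
    simp only [hEd]
    simp only [hrow]
    exact det_submatrix_mem_minorsIdeal O (n + 1) (Fin.snoc fk (fj s)) _
      (extendLast_strictMono hm0 hfl)
  have hFm : ∀ r, F r ∈ minorsIdeal O (n + 1) := by
    intro r
    have hrow : (Fin.snoc (fun x => ρ (fi x)) (ρ (fl r)) : Fin (n + 1) → Fin m)
        = ρ ∘ Fin.snoc fi (fl r) := (Fin.comp_snoc ρ fi (fl r)).symm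
    simp only [hFd]
    simp only [hrow]
    exact det_submatrix_mem_minorsIdeal O (n + 1) (Fin.snoc fi (fl r)) _
      (extendLast_strictMono hm0 hfj)
  exact Ideal.sub_mem _
    (Ideal.sum_mem _ fun s _ => Ideal.mul_mem_left _ _ (hEm s))
    (Ideal.sum_mem _ fun r _ => Ideal.mul_mem_left _ _ (hFm r))

/-- For a symmetric `m × m` matrix `M` over a commutative ring, with `I_Y` the ideal
generated by the `t × t` minors of `M` not involving the last row, the element
`M_{i,m;j,m}·M_{k;l} − M_{k,m;l,m}·M_{i;j}` lies in `I_Y`, for all strictly increasing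
`(t-1)`-tuples `i, j, k, l` of indices in `{1, …, m-1}`. -/
theorem statement_12 {A : Type*} [CommRing A] (m t : ℕ) (ht1 : 2 ≤ t) (htm : t ≤ m)
    (M : Matrix (Fin m) (Fin m) A) (hsymm : M.IsSymm)
    (fi fj fk fl : Fin (t - 1) → Fin (m - 1))
    (hfi : StrictMono fi) (hfj : StrictMono fj)
    (hfk : StrictMono fk) (hfl : StrictMono fl) :
    (M.submatrix (extendLast (by omega) fi) (extendLast (by omega) fj)).det *
        (M.submatrix (fun s => Fin.castLE (Nat.sub_le m 1) (fk s))
          (fun s => Fin.castLE (Nat.sub_le m 1) (fl s))).det -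
      (M.submatrix (extendLast (by omega) fk) (extendLast (by omega) fl)).det *
        (M.submatrix (fun s => Fin.castLE (Nat.sub_le m 1) (fi s))
          (fun s => Fin.castLE (Nat.sub_le m 1) (fj s))).det ∈
      minorsIdeal
        (Matrix.of fun (i : Fin (m - 1)) (j : Fin m) => M (Fin.castLE (Nat.sub_le m 1) i) j)
        t := by
  obtain ⟨n, rfl⟩ : ∃ n, t = n + 1 := ⟨t - 1, by omega⟩
  exact statement12_aux m n (by omega) M hsymm fi fj fk fl hfi hfj hfk hfl
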